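/- arXiv:math/0512317 — 7 statements merged into one kernel-verified Lean document; each statement's English description precedes it below -/
import Mathlib

section
/- Let m > 1 be an integer and let 0 < ε < 1/m. Then there exists a natural number N such that for every complex number z satisfying ε ≤ |z - 1| ≤ 1/m, there exists a natural number k with 1 ≤ k ≤ N such that |z^k - 1| > 1/m. -/
/-!
If `‖z ^ k - 1‖ ≤ r < 1` for all `1 ≤ k ≤ N`, then every `z ^ k` with `k < N` has real part at
least `1 - r`, so the geometric sum `∑_{k<N} z ^ k` has norm at least `N (1 - r)`. On the other
hand it equals `(z ^ N - 1) / (z - 1)`, whose norm is at most `r / ‖z - 1‖`. Hence `N` is bounded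
in terms of `r` and a lower bound for `‖z - 1‖`.
-/

open Finset

namespace Complex

theorem one_sub_le_re_of_norm_sub_one_le {w : ℂ} {r : ℝ} (h : ‖w - 1‖ ≤ r) : 1 - r ≤ w.re := by
  have hre : (1 - w).re ≤ ‖w - 1‖ := norm_sub_rev w 1 ▸ re_le_norm (1 - w)
  rw [sub_re, one_re] at hre
  linarith

theorem natCast_mul_one_sub_le_norm_geom_sum {z : ℂ} {r : ℝ} {N : ℕ}
    (h : ∀ k < N, ‖z ^ k - 1‖ ≤ r) : N * (1 - r) ≤ ‖∑ k ∈ range N, z ^ k‖ :=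
  calc (N : ℝ) * (1 - r) = ∑ _k ∈ range N, (1 - r) := by
        rw [sum_const, card_range, nsmul_eq_mul]
    _ ≤ ∑ k ∈ range N, (z ^ k).re :=
        sum_le_sum fun k hk => one_sub_le_re_of_norm_sub_one_le (h k (mem_range.mp hk))
    _ = (∑ k ∈ range N, z ^ k).re := (re_sum _ _).symm
    _ ≤ ‖∑ k ∈ range N, z ^ k‖ := re_le_norm _

theorem exists_lt_norm_pow_sub_one {r ε : ℝ} (hr : r < 1) (hε : 0 < ε) :
    ∃ N : ℕ, ∀ z : ℂ, ε ≤ ‖z - 1‖ → ∃ k : ℕ, 1 ≤ k ∧ k ≤ N ∧ r < ‖z ^ k - 1‖ := by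
  refine ⟨⌊r / (ε * (1 - r))⌋₊ + 1, fun z hz => ?_⟩
  set N := ⌊r / (ε * (1 - r))⌋₊ + 1
  by_contra! h
  have hεr : ε ≤ r := hz.trans (by simpa using h 1 le_rfl (by omega))
  have hz1 : z ≠ 1 := by
    rintro rfl
    simp only [sub_self, norm_zero] at hz
    linarith
  have lower : N * (1 - r) ≤ ‖∑ k ∈ range N, z ^ k‖ := by
    refine natCast_mul_one_sub_le_norm_geom_sum fun k hk => ?_
    rcases Nat.eq_zero_or_pos k with rfl | hk0
    · simpa using hε.le.trans hεr
    · exact h k hk0 hk.le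
  have upper : ‖∑ k ∈ range N, z ^ k‖ ≤ r / ε := by
    rw [geom_sum_eq hz1, norm_div]
    exact div_le_div₀ (hε.le.trans hεr) (h N (by omega) le_rfl) hε hz
  have hN : (N : ℝ) ≤ r / (ε * (1 - r)) := by
    have h1r : 0 < 1 - r := by linarith
    rw [le_div_iff₀ (by positivity)]
    calc (N : ℝ) * (ε * (1 - r)) = N * (1 - r) * ε := by ring
      _ ≤ r / ε * ε := by gcongr; exact lower.trans upper
      _ = r := div_mul_cancel₀ r hε.ne'
  exact (Nat.lt_floor_add_one (r / (ε * (1 - r)))).not_ge (mod_cast hN)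

end Complex

theorem stmt_0_general (m : ℤ) (hm : 1 < m) (ε : ℝ) (hε : 0 < ε) :
    ∃ N : ℕ, ∀ z : ℂ, ε ≤ ‖z - 1‖ → ‖z - 1‖ ≤ 1 / (m : ℝ) →
      ∃ k : ℕ, 1 ≤ k ∧ k ≤ N ∧ 1 / (m : ℝ) < ‖z ^ k - 1‖ := by
  have hm1 : 1 / (m : ℝ) < 1 := by
    rw [div_lt_one (by positivity)]
    exact_mod_cast hm
  obtain ⟨N, hN⟩ := Complex.exists_lt_norm_pow_sub_one hm1 hε
  exact ⟨N, fun z hz _ => hN z hz⟩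

theorem stmt_0 (m : ℤ) (hm : 1 < m) (ε : ℝ) (hε : 0 < ε) (hεm : ε < 1 / (m : ℝ)) :
    ∃ N : ℕ, ∀ z : ℂ, ε ≤ ‖z - 1‖ → ‖z - 1‖ ≤ 1 / (m : ℝ) →
      ∃ k : ℕ, 1 ≤ k ∧ k ≤ N ∧ 1 / (m : ℝ) < ‖z ^ k - 1‖ :=
  stmt_0_general m hm ε hε
end

section
/- Let G be a topological abelian group, let U be a neighbourhood of 0 that generates G, let m > 1 be an integer, and let T_m be the set of continuous homomorphisms α : G → ℂ* with |α(u) - 1| ≤ 1/m for all u in the closure of U. Then T_m is equicontinuous at 0: for every ε > 0 there is a neighbourhood W of 0 in G such that |α(s) - 1| < ε for all s ∈ W and all α ∈ T_m. -/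
/-!
If `‖z - 1‖ ≤ 1/2` then `‖z + 1‖ ≥ 3/2`, so squaring enlarges the distance to `1` by a factor of
at least `3/2`. Hence, if `s, 2s, 4s, …, 2^j s` all lie in `U`, every `α` in the family has
`‖α (2^i s) - 1‖ = ‖α s ^ 2^i - 1‖ ≤ 1/m ≤ 1/2` for `i ≤ j`, which forces
`‖α s - 1‖ ≤ (2/3)^j / 2`. The set of such `s` is a neighbourhood of `0` since `x ↦ 2^i • x`
is continuous.
-/

open Filter Topology

lemma norm_sub_one_le_of_norm_sq_sub_one {𝕜 : Type*} [RCLike 𝕜] {z : 𝕜}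
    (hz : ‖z - 1‖ ≤ 1 / 2) : ‖z - 1‖ ≤ 2 / 3 * ‖z ^ 2 - 1‖ := by
  have hplus : 3 / 2 ≤ ‖z + 1‖ := by
    have := norm_add_le (z + 1) (1 - z)
    rw [show z + 1 + (1 - z) = 2 by ring, RCLike.norm_two, norm_sub_rev] at this
    linarith
  rw [show z ^ 2 - 1 = (z - 1) * (z + 1) by ring, norm_mul]
  nlinarith [norm_nonneg (z - 1)]

lemma norm_sub_one_le_of_forall_norm_pow_two_pow_sub_one_le {𝕜 : Type*} [RCLike 𝕜]
    (j : ℕ) {z : 𝕜} (hz : ∀ i ≤ j, ‖z ^ 2 ^ i - 1‖ ≤ 1 / 2) :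
    ‖z - 1‖ ≤ (2 / 3) ^ j / 2 := by
  induction j generalizing z with
  | zero => simpa using hz 0 le_rfl
  | succ j ih =>
    have hsq : ‖z ^ 2 - 1‖ ≤ (2 / 3) ^ j / 2 :=
      ih fun i hi => by simpa [← pow_mul, ← pow_succ'] using hz (i + 1) (by omega)
    calc ‖z - 1‖ ≤ 2 / 3 * ‖z ^ 2 - 1‖ :=
          norm_sub_one_le_of_norm_sq_sub_one (by simpa using hz 0 (Nat.zero_le _))
      _ ≤ 2 / 3 * ((2 / 3) ^ j / 2) := by gcongr
      _ = (2 / 3) ^ (j + 1) / 2 := by ring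

lemma eventually_forall_le_two_pow_nsmul_mem {G : Type*} [AddMonoid G] [TopologicalSpace G]
    [ContinuousAdd G] {U : Set G} (hU : U ∈ 𝓝 (0 : G)) (j : ℕ) :
    ∀ᶠ x in 𝓝 (0 : G), ∀ i ≤ j, (2 ^ i) • x ∈ U := by
  refine (Set.finite_Iic j).eventually_all.2 fun i _ => ?_
  exact (continuous_nsmul (2 ^ i)).tendsto' 0 0 (nsmul_zero _) |>.eventually_mem hU

theorem stmt_6_general {G : Type*} [AddCommGroup G] [TopologicalSpace G] [IsTopologicalAddGroup G]
    (U : Set G) (hU : U ∈ nhds (0 : G))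
    (m : ℤ) (hm : 1 < m) (ε : ℝ) (hε : 0 < ε) :
    ∃ W ∈ nhds (0 : G), ∀ α : G → ℂ, Continuous α → (∀ x, α x ≠ 0) →
      (∀ s t, α (s + t) = α s * α t) →
      (∀ u ∈ closure U, ‖α u - 1‖ ≤ 1 / (m : ℝ)) →
      ∀ s ∈ W, ‖α s - 1‖ < ε := by
  obtain ⟨j, hj⟩ := exists_pow_lt_of_lt_one hε (by norm_num : (2 / 3 : ℝ) < 1)
  refine ⟨_, eventually_forall_le_two_pow_nsmul_mem hU j, fun α _ hne hmul hbound s hs => ?_⟩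
  have h0 : α 0 = 1 := mul_left_cancel₀ (hne 0) (by rw [← hmul, add_zero, mul_one])
  let ψ : AddChar G ℂ := ⟨α, h0, hmul⟩
  have hm_inv : 1 / (m : ℝ) ≤ 1 / 2 :=
    one_div_le_one_div_of_le two_pos (by exact_mod_cast hm)
  have hsmall : ∀ i ≤ j, ‖α s ^ 2 ^ i - 1‖ ≤ 1 / 2 := fun i hi =>
    ψ.map_nsmul_eq_pow (2 ^ i) s ▸ (hbound _ (subset_closure (hs i hi))).trans hm_inv
  calc ‖α s - 1‖ ≤ (2 / 3) ^ j / 2 :=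
        norm_sub_one_le_of_forall_norm_pow_two_pow_sub_one_le j hsmall
    _ < ε := by linarith [pow_pos (by norm_num : (0 : ℝ) < 2 / 3) j]

theorem stmt_6 {G : Type*} [AddCommGroup G] [TopologicalSpace G] [IsTopologicalAddGroup G]
    (U : Set G) (hU : U ∈ nhds (0 : G)) (hgen : AddSubgroup.closure (closure U) = ⊤)
    (m : ℤ) (hm : 1 < m) (ε : ℝ) (hε : 0 < ε) :
    ∃ W ∈ nhds (0 : G), ∀ α : G → ℂ, Continuous α → (∀ x, α x ≠ 0) →
      (∀ s t, α (s + t) = α s * α t) →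
      (∀ u ∈ closure U, ‖α u - 1‖ ≤ 1 / (m : ℝ)) →
      ∀ s ∈ W, ‖α s - 1‖ < ε :=
  stmt_6_general U hU m hm ε hε
end

section
/- If G is a compactly generated locally compact abelian group, then the set H(G) of all continuous group homomorphisms G → ℂ*, equipped with the compact-open topology and pointwise multiplication, is a locally compact abelian topological group. -/
/-!
Let `V n = {z ∈ ℂ* | ‖log z‖ ≤ 2⁻ⁿ}`; since `log (z²) = 2 log z` for small `z`, the condition
`z, z² ∈ V n` forces `z ∈ V (n + 1)` ("no small subgroups"). Take a compact neighbourhood `U` of `1`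
in `G` that generates `G`, and a compact neighbourhood `W ⊆ V 0` of `1` in `ℂ*`. Pushing this
halving property through neighbourhoods `U ⊇ U₁ ⊇ ⋯` with `Uₙ₊₁ Uₙ₊₁ ⊆ Uₙ` shows that the
characters mapping `U` into `W` are equicontinuous, and since `U` generates `G` their values at
each point stay in a fixed compact set. By Tychonoff and Arzelà–Ascoli these characters form a
compact set, which is a neighbourhood of the trivial character in the compact-open topology.
-/

open Set Filter Topology Pointwise

namespace MonoidHom

theorem exists_isCompact_forall_apply_mem {X Y : Type*} [Group X] [Group Y] [TopologicalSpace Y]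
    [ContinuousMul Y] [ContinuousInv Y] {U : Set X} {W : Set Y} (hW : IsCompact W) {x : X}
    (hx : x ∈ Subgroup.closure U) :
    ∃ Q : Set Y, IsCompact Q ∧ ∀ f : X →* Y, MapsTo f U W → f x ∈ Q := by
  induction hx using Subgroup.closure_induction with
  | mem y hy => exact ⟨W, hW, fun f hf ↦ hf hy⟩
  | one => exact ⟨{1}, isCompact_singleton, fun f _ ↦ map_one f⟩
  | mul y z _ _ ihy ihz =>
    obtain ⟨Qy, hQy, hy⟩ := ihy
    obtain ⟨Qz, hQz, hz⟩ := ihz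
    exact ⟨Qy * Qz, hQy.mul hQz, fun f hf ↦ map_mul f y z ▸ mul_mem_mul (hy f hf) (hz f hf)⟩
  | inv y _ ihy =>
    obtain ⟨Qy, hQy, hy⟩ := ihy
    exact ⟨Qy⁻¹, hQy.inv, fun f hf ↦ map_inv f y ▸ inv_mem_inv.mpr (hy f hf)⟩

theorem isCompact_image_coe_setOf_mapsTo {X Y : Type*} [Group X] [Group Y] [TopologicalSpace Y]
    [IsTopologicalGroup Y] [T2Space Y] {U : Set X} (hU : Subgroup.closure U = ⊤) {W : Set Y}
    (hW : IsCompact W) : IsCompact (((⇑) : (X →* Y) → X → Y) '' {f | MapsTo f U W}) := by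
  choose Q hQ hfQ using fun x ↦ exists_isCompact_forall_apply_mem (U := U) hW (hU ▸ Subgroup.mem_top x)
  have himage : ((⇑) : (X →* Y) → X → Y) '' {f | MapsTo f U W} =
      Set.pi U (fun _ ↦ W) ∩ Set.range ((⇑) : (X →* Y) → X → Y) := by
    ext g
    constructor
    · rintro ⟨f, hf, rfl⟩
      exact ⟨fun x hx ↦ hf hx, f, rfl⟩
    · rintro ⟨hg, f, rfl⟩
      exact ⟨f, fun x hx ↦ hg x hx, rfl⟩
  refine (isCompact_univ_pi hQ).of_isClosed_subset ?_ ?_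
  · rw [himage]
    exact (isClosed_set_pi fun _ _ ↦ hW.isClosed).inter (isClosed_range_coe X Y)
  · rintro - ⟨f, hf, rfl⟩ x -
    exact hfQ x f hf

theorem equicontinuousAt_one_of_hasBasis {ι X Y : Type*} [TopologicalSpace X] [Monoid X]
    [ContinuousMul X] [UniformSpace Y] [Group Y] [IsUniformGroup Y] {V : ℕ → Set Y}
    (hVo : (𝓝 1).HasBasis (fun _ ↦ True) V)
    (hV : ∀ {n x}, x ∈ V n → x * x ∈ V n → x ∈ V (n + 1)) {N : Set X} (hN : N ∈ 𝓝 1)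
    {F : ι → X →* Y} (hF : ∀ i, MapsTo (F i) N (V 0)) :
    EquicontinuousAt (fun i ↦ ⇑(F i)) 1 := by
  have hsmall : ∀ n, ∃ M ∈ 𝓝 (1 : X), ∀ i, MapsTo (F i) M (V n) := by
    intro n
    induction n with
    | zero => exact ⟨N, hN, hF⟩
    | succ n ih =>
      obtain ⟨M, hM, hFM⟩ := ih
      obtain ⟨M', hM'o, hM'1, hM'M⟩ := exists_open_nhds_one_mul_subset hM
      refine ⟨M', hM'o.mem_nhds hM'1, fun i x hx ↦ hV ?_ ?_⟩
      · exact hFM i (hM'M (mul_one x ▸ mul_mem_mul hx hM'1))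
      · exact map_mul (F i) x x ▸ hFM i (hM'M (mul_mem_mul hx hx))
  rw [hVo.uniformity_of_nhds_one.equicontinuousAt_iff_right]
  intro n _
  obtain ⟨M, hM, hFM⟩ := hsmall n
  filter_upwards [hM] with x hx i
  simpa using hFM i hx

end MonoidHom

namespace ContinuousMonoidHom

theorem isCompact_setOf_mapsTo {X Y : Type*} [TopologicalSpace X] [Group X] [UniformSpace Y]
    [Group Y] [IsUniformGroup Y] [T2Space Y] {U : Set X} (hU : Subgroup.closure U = ⊤)
    {W : Set Y} (hW : IsCompact W)
    (h : Equicontinuous fun f : {f : X →* Y | MapsTo f U W} ↦ (f : X → Y)) :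
    IsCompact {f : X →ₜ* Y | MapsTo f U W} := by
  set S : Set C(X, Y) := toContinuousMap '' {f : X →ₜ* Y | MapsTo f U W}
  have hS : ((⇑) : C(X, Y) → X → Y) '' S = ((⇑) : (X →* Y) → X → Y) '' {f | MapsTo f U W} := by
    ext g
    constructor
    · rintro ⟨-, ⟨f, hf, rfl⟩, rfl⟩
      exact ⟨f, hf, rfl⟩
    · rintro ⟨f, hf, rfl⟩
      exact ⟨_, ⟨⟨f, h.continuous ⟨f, hf⟩⟩, hf, rfl⟩, rfl⟩
  rw [(isInducing_toContinuousMap X Y).isCompact_iff]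
  refine ArzelaAscoli.isCompact_of_equicontinuous S ?_ ?_
  · exact hS ▸ MonoidHom.isCompact_image_coe_setOf_mapsTo hU hW
  · rw [equicontinuous_iff_range, ← image_eq_range, hS, image_eq_range]
    rwa [equicontinuous_iff_range] at h

theorem locallyCompactSpace_of_hasBasis_of_closure_eq_top {X Y : Type*} [TopologicalSpace X]
    [Group X] [IsTopologicalGroup X] [LocallyCompactSpace X] [TopologicalSpace Y] [CommGroup Y]
    [IsTopologicalGroup Y] [T2Space Y] [LocallyCompactSpace Y]
    (hX : ∃ K : Set X, IsCompact K ∧ Subgroup.closure K = ⊤) {V : ℕ → Set Y}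
    (hVo : (𝓝 1).HasBasis (fun _ ↦ True) V)
    (hV : ∀ {n x}, x ∈ V n → x * x ∈ V n → x ∈ V (n + 1)) : LocallyCompactSpace (X →ₜ* Y) := by
  let := IsTopologicalGroup.rightUniformSpace Y
  have := comm_topologicalGroup_is_uniform (G := Y)
  obtain ⟨K, hK, hKgen⟩ := hX
  obtain ⟨N, hN, hN1⟩ := exists_compact_mem_nhds (1 : X)
  obtain ⟨W, hW1, hWV, hW⟩ := local_compact_nhds (hVo.mem_of_mem (i := 0) trivial)
  have hgen : Subgroup.closure (K ∪ N) = ⊤ :=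
    eq_top_mono (Subgroup.closure_mono subset_union_left) hKgen
  have hequi : Equicontinuous fun f : {f : X →* Y | MapsTo f (K ∪ N) W} ↦ (f : X → Y) :=
    equicontinuous_of_equicontinuousAt_one _ <|
      MonoidHom.equicontinuousAt_one_of_hasBasis hVo hV
        (mem_of_superset hN1 subset_union_right) fun f ↦ f.2.mono_right hWV
  have hint : (interior {f : X →ₜ* Y | MapsTo f (K ∪ N) W}).Nonempty := by
    have hopen : IsOpen {f : X →ₜ* Y | MapsTo f (K ∪ N) (interior W)} :=
      isOpen_induced (ContinuousMap.isOpen_setOfPred_mapsTo (hK.union hN) isOpen_interior)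
    refine ⟨1, interior_maximal (fun f hf ↦ hf.mono_right interior_subset) hopen ?_⟩
    exact fun _ _ ↦ mem_interior_iff_mem_nhds.mpr hW1
  exact TopologicalSpace.PositiveCompacts.locallyCompactSpace_of_group
    ⟨⟨_, isCompact_setOf_mapsTo hgen hW hequi⟩, hint⟩

end ContinuousMonoidHom

namespace Complex

theorem log_mul_self {z : ℂ} (hz : z ≠ 0) (h : |arg z| < Real.pi / 2) :
    log (z * z) = 2 * log z := by
  rw [log_mul hz hz, two_mul]
  obtain ⟨hlow, hhigh⟩ := abs_lt.mp h
  constructor <;> linarith [Real.pi_pos]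

theorem norm_log_le_half_of_norm_log_mul_self_le {z : ℂ} (hz : z ≠ 0) {r : ℝ} (hr : r ≤ 1)
    (h : ‖log z‖ ≤ r) (hsq : ‖log (z * z)‖ ≤ r) : ‖log z‖ ≤ r / 2 := by
  have harg : |arg z| < Real.pi / 2 := calc
    |arg z| = |(log z).im| := by rw [log_im]
    _ ≤ ‖log z‖ := abs_im_le_norm _
    _ < Real.pi / 2 := by linarith [Real.pi_gt_three]
  rw [log_mul_self hz harg, norm_mul, Complex.norm_two] at hsq
  linarith

theorem nhds_one_units_eq_comap_log : 𝓝 (1 : ℂˣ) = comap (fun z : ℂˣ ↦ log z) (𝓝 0) := by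
  refine le_antisymm (tendsto_iff_comap.mp ?_) ?_
  · simpa [ContinuousAt, Function.comp_def] using
      (continuousAt_clog (by simp)).comp Units.continuous_val.continuousAt (x := 1)
  · rw [Units.isEmbedding_val₀.nhds_eq_comap, ← tendsto_iff_comap, Units.val_one]
    refine Tendsto.congr (fun z ↦ exp_log z.ne_zero) ?_
    simpa [Function.comp_def] using (continuous_exp.tendsto 0).comp tendsto_comap

theorem hasBasis_nhds_one_units :
    (𝓝 (1 : ℂˣ)).HasBasis (fun _ ↦ True) fun n ↦ {z : ℂˣ | ‖log z‖ ≤ 2⁻¹ ^ n} := by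
  rw [nhds_one_units_eq_comap_log]
  simpa [Metric.closedBall, preimage] using
    (Metric.nhds_basis_closedBall_pow (x := (0 : ℂ)) (by norm_num : (0 : ℝ) < 2⁻¹)
      (by norm_num)).comap (fun z : ℂˣ ↦ log z)

theorem norm_log_units_le_of_mul_self {n : ℕ} {z : ℂˣ} (h : ‖log (z : ℂ)‖ ≤ 2⁻¹ ^ n)
    (hsq : ‖log ((z * z : ℂˣ) : ℂ)‖ ≤ 2⁻¹ ^ n) : ‖log (z : ℂ)‖ ≤ 2⁻¹ ^ (n + 1) := by
  rw [pow_succ, ← div_eq_mul_inv]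
  exact norm_log_le_half_of_norm_log_mul_self_le z.ne_zero
    (pow_le_one₀ (by norm_num) (by norm_num)) h (by simpa using hsq)

end Complex

theorem stmt_8_general {G : Type*} [AddCommGroup G] [TopologicalSpace G] [IsTopologicalAddGroup G]
    [LocallyCompactSpace G]
    (hK : ∃ K : Set G, IsCompact K ∧ AddSubgroup.closure K = ⊤) :
    LocallyCompactSpace (ContinuousMonoidHom (Multiplicative G) ℂˣ) ∧
      IsTopologicalGroup (ContinuousMonoidHom (Multiplicative G) ℂˣ) := by
  obtain ⟨K, hK, hKgen⟩ := hK
  have hgen : Subgroup.closure (Multiplicative.toAdd ⁻¹' K) = ⊤ := by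
    rw [← AddSubgroup.toSubgroup_closure, hKgen]
    exact AddSubgroup.toSubgroup.map_top
  exact ⟨ContinuousMonoidHom.locallyCompactSpace_of_hasBasis_of_closure_eq_top ⟨_, hK, hgen⟩
    Complex.hasBasis_nhds_one_units Complex.norm_log_units_le_of_mul_self, inferInstance⟩

theorem stmt_8 {G : Type*} [AddCommGroup G] [TopologicalSpace G] [IsTopologicalAddGroup G]
    [T2Space G] [LocallyCompactSpace G]
    (hK : ∃ K : Set G, IsCompact K ∧ AddSubgroup.closure K = ⊤) :
    LocallyCompactSpace (ContinuousMonoidHom (Multiplicative G) ℂˣ) ∧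
      IsTopologicalGroup (ContinuousMonoidHom (Multiplicative G) ℂˣ) :=
  stmt_8_general hK
end

section
/- Let G be a compactly generated locally compact abelian group. Then every continuous group homomorphism G → ℂ* takes values in the unit circle (i.e., H(G) equals the dual group of G) if and only if G is compact. -/
/-!
If `G` is compact, `‖α‖` is a bounded multiplicative function `G → (0, ∞)`, hence constantly `1`.

If `G` is not compact, let `V` be a compact symmetric neighbourhood of `0` generating `G`, and `ℓ`
the word length with respect to `W = V + V`. Covering `W` by finitely many translates `V - g` and
pigeonholing the letters of geodesic words of unbounded length gives `y` with `ℓ (k • y) ≥ k`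
for infinitely many `k`, so the stable norm `p x = lim ℓ (n • x) / n` has `p y ≥ 1`. As `p` is
subadditive and `ℕ`-homogeneous, a Hahn–Banach argument over `ℤ` yields `φ : G →+ ℝ` with `φ ≤ p`
and `φ y = p y`. Since `φ ≤ 1` on the neighbourhood `W`, `φ` is continuous, and `exp ∘ φ` is a
continuous homomorphism into `ℂˣ` that is not unitary at `y`.
-/

open Filter Topology Pointwise

section WordLength

variable {G : Type*} [AddCommMonoid G]

/-- `0` for `x` outside the additive submonoid generated by `W`, since `sInf ∅ = 0`. -/
noncomputable def wordLength (W : Set G) (x : G) : ℕ := sInf {n | x ∈ n • W}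

variable {W : Set G} {x : G} {n : ℕ}

theorem wordLength_le_of_mem_nsmul (h : x ∈ n • W) : wordLength W x ≤ n := Nat.sInf_le h

theorem wordLength_le_one_of_mem (h : x ∈ W) : wordLength W x ≤ 1 :=
  wordLength_le_of_mem_nsmul (by rwa [one_nsmul])

theorem mem_nsmul_wordLength (hW : ∀ x, ∃ n : ℕ, x ∈ n • W) (x : G) : x ∈ wordLength W x • W :=
  Nat.sInf_mem (hW x)

theorem lt_wordLength_of_notMem_nsmul (hW : ∀ x, ∃ n : ℕ, x ∈ n • W) (hW0 : 0 ∈ W)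
    (h : x ∉ n • W) : n < wordLength W x :=
  lt_of_not_ge fun hle ↦ h (Set.nsmul_subset_nsmul_right hW0 hle (mem_nsmul_wordLength hW x))

theorem wordLength_add_le (hW : ∀ x, ∃ n : ℕ, x ∈ n • W) (x y : G) :
    wordLength W (x + y) ≤ wordLength W x + wordLength W y :=
  wordLength_le_of_mem_nsmul <| by
    rw [add_nsmul]
    exact Set.add_mem_add (mem_nsmul_wordLength hW x) (mem_nsmul_wordLength hW y)

theorem wordLength_sum_le {ι : Type*} (s : Finset ι) {v : ι → G} (hv : ∀ i ∈ s, v i ∈ W) :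
    wordLength W (∑ i ∈ s, v i) ≤ s.card :=
  wordLength_le_of_mem_nsmul <| by
    simpa using Set.finsetSum_mem_finsetSum s (fun _ ↦ W) v hv

theorem card_le_wordLength_sum {ι : Type*} [Fintype ι] [DecidableEq ι]
    (hW : ∀ x, ∃ n : ℕ, x ∈ n • W) {v : ι → G} (hv : ∀ i, v i ∈ W)
    (hgeod : Fintype.card ι ≤ wordLength W (∑ i, v i)) (s : Finset ι) :
    s.card ≤ wordLength W (∑ i ∈ s, v i) := by
  have hcompl := wordLength_sum_le sᶜ fun i _ ↦ hv i
  have := wordLength_add_le hW (∑ i ∈ s, v i) (∑ i ∈ sᶜ, v i)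
  rw [Finset.sum_add_sum_compl] at this
  rw [Finset.card_compl] at hcompl
  have := s.card_le_univ
  omega

theorem exists_mem_nsmul_nsmul (hW0 : (0 : G) ∈ W) (hW : ∀ x, ∃ n : ℕ, x ∈ n • W) {m : ℕ}
    (hm : 0 < m) (x : G) : ∃ n : ℕ, x ∈ n • m • W := by
  obtain ⟨n, hn⟩ := hW x
  refine ⟨n, ?_⟩
  rw [← mul_nsmul]
  exact Set.nsmul_subset_nsmul_right hW0 (Nat.le_mul_of_pos_left n hm) hn

end WordLength

theorem exists_mem_nsmul_of_closure_eq_top {G : Type*} [AddGroup G] {K V : Set G} (hKV : K ⊆ V)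
    (hVneg : -V ⊆ V) (hK : AddSubgroup.closure K = ⊤) (x : G) : ∃ n : ℕ, x ∈ n • V := by
  refine AddSubgroup.closure_induction (fun x hx ↦ ⟨1, by rw [one_nsmul]; exact hKV hx⟩)
    ⟨0, by simp⟩ (fun x y _ _ ⟨m, hm⟩ ⟨n, hn⟩ ↦ ⟨m + n, ?_⟩) (fun x _ ⟨n, hn⟩ ↦ ⟨n, ?_⟩)
    (hK ▸ AddSubgroup.mem_top x : x ∈ AddSubgroup.closure K)
  · rw [add_nsmul]
    exact Set.add_mem_add hm hn
  · refine Set.nsmul_subset_nsmul_left hVneg ?_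
    rw [neg_nsmul]
    exact Set.neg_mem_neg.2 hn

section StableNorm

variable {G : Type*} [AddCommMonoid G] {ℓ : G → ℝ}

noncomputable def stableNorm (ℓ : G → ℝ) (x : G) : ℝ :=
  limUnder atTop fun n : ℕ ↦ ℓ (n • x) / n

variable (hℓ : ∀ x y, ℓ (x + y) ≤ ℓ x + ℓ y)
include hℓ

theorem subadditive_nsmul (x : G) : Subadditive fun n ↦ ℓ (n • x) := fun m n ↦ by
  simp only [add_nsmul]
  exact hℓ _ _

variable (hℓ0 : ∀ x, 0 ≤ ℓ x)
include hℓ0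

theorem tendsto_stableNorm (x : G) :
    Tendsto (fun n : ℕ ↦ ℓ (n • x) / n) atTop (𝓝 (stableNorm ℓ x)) := by
  have hbdd : BddBelow (Set.range fun n : ℕ ↦ ℓ (n • x) / n) :=
    ⟨0, by rintro _ ⟨n, rfl⟩; exact div_nonneg (hℓ0 _) n.cast_nonneg⟩
  have := (subadditive_nsmul hℓ x).tendsto_lim hbdd
  rwa [stableNorm, this.limUnder_eq]

theorem stableNorm_nsmul (m : ℕ) (x : G) : stableNorm ℓ (m • x) = m * stableNorm ℓ x := by
  rcases Nat.eq_zero_or_pos m with rfl | hm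
  · refine tendsto_nhds_unique (tendsto_stableNorm hℓ hℓ0 _) ?_
    simpa using tendsto_const_div_atTop_nhds_zero_nat (ℓ 0)
  refine tendsto_nhds_unique (tendsto_stableNorm hℓ hℓ0 _) ?_
  have hmul : Tendsto (fun n : ℕ ↦ n * m) atTop atTop :=
    tendsto_atTop_mono (fun n ↦ Nat.le_mul_of_pos_right n hm) tendsto_id
  refine (((tendsto_stableNorm hℓ hℓ0 x).comp hmul).const_mul (m : ℝ)).congr fun n ↦ ?_
  simp only [Function.comp_apply, Nat.cast_mul, mul_nsmul, smul_comm m n x]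
  rcases Nat.eq_zero_or_pos n with rfl | hn
  · simp
  field_simp

theorem stableNorm_add_le (x y : G) :
    stableNorm ℓ (x + y) ≤ stableNorm ℓ x + stableNorm ℓ y :=
  le_of_tendsto_of_tendsto' (tendsto_stableNorm hℓ hℓ0 _)
    ((tendsto_stableNorm hℓ hℓ0 x).add (tendsto_stableNorm hℓ hℓ0 y)) fun n ↦ by
      rw [nsmul_add, ← add_div]; gcongr; exact hℓ _ _

theorem stableNorm_le (x : G) : stableNorm ℓ x ≤ ℓ x := by
  refine le_of_tendsto (tendsto_stableNorm hℓ hℓ0 x) ?_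
  filter_upwards [eventually_gt_atTop 0] with n hn
  rw [div_le_iff₀ (by positivity), mul_comm]
  have := (subadditive_nsmul hℓ x).apply_mul_add_le (n - 1) 1 1
  rw [mul_one, Nat.sub_add_cancel hn, one_nsmul, Nat.cast_pred hn] at this
  linarith

theorem le_stableNorm_of_frequently {c : ℝ} {x : G}
    (h : ∃ᶠ n : ℕ in atTop, c * n ≤ ℓ (n • x)) : c ≤ stableNorm ℓ x := by
  refine isClosed_Ici.mem_of_frequently_of_tendsto ?_ (tendsto_stableNorm hℓ hℓ0 x)
  refine (h.and_eventually (eventually_gt_atTop 0)).mono fun n ⟨hn, hpos⟩ ↦ ?_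
  exact (le_div_iff₀ (by exact_mod_cast hpos)).2 hn

end StableNorm

section IntegerHahnBanach

variable {G : Type*} [AddCommGroup G] {p : G → ℝ}
  (hp_nsmul : ∀ (n : ℕ) (x : G), p (n • x) = n * p x) (hp_add : ∀ x y, p (x + y) ≤ p x + p y)
include hp_nsmul hp_add

theorem sub_div_le_div_sub_of_le_sublinear {f : G →ₗ.[ℤ] ℝ} (hf : ∀ x : f.domain, f x ≤ p x)
    (z : G) (h₁ h₂ : f.domain) {n₁ n₂ : ℕ} (hn₁ : 0 < n₁) (hn₂ : 0 < n₂) :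
    (f h₁ - p (h₁ - n₁ • z)) / n₁ ≤ (p (h₂ + n₂ • z) - f h₂) / n₂ := by
  rw [div_le_div_iff₀ (by positivity) (by positivity)]
  have hsplit : ((n₂ • h₁ + n₁ • h₂ : f.domain) : G) =
      n₂ • ((h₁ : G) - n₁ • z) + n₁ • ((h₂ : G) + n₂ • z) := by
    simp only [Submodule.coe_add, Submodule.coe_smul_of_tower, smul_sub, smul_add,
      smul_comm n₂ n₁ z]
    abel
  have hfp := hf (n₂ • h₁ + n₁ • h₂)
  have hf_nsmul : ∀ (n : ℕ) (h : f.domain), f (n • h) = n * f h := fun n h ↦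
    (map_nsmul f.toFun n h).trans (nsmul_eq_mul _ _)
  rw [hsplit, LinearPMap.map_add, hf_nsmul, hf_nsmul] at hfp
  have hpp := hp_add (n₂ • ((h₁ : G) - n₁ • z)) (n₁ • ((h₂ : G) + n₂ • z))
  rw [hp_nsmul, hp_nsmul] at hpp
  linarith

theorem exists_add_mul_le_of_le_sublinear {f : G →ₗ.[ℤ] ℝ} (hf : ∀ x : f.domain, f x ≤ p x)
    (z : G) : ∃ v : ℝ, ∀ (h : f.domain) (m : ℤ), f h + m * v ≤ p (h + m • z) := by
  obtain ⟨v, hlow, hup⟩ := exists_between_of_forall_le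
    (s := {r | ∃ (h : f.domain) (n : ℕ), 0 < n ∧ r = (f h - p (h - n • z)) / n})
    (t := {r | ∃ (h : f.domain) (n : ℕ), 0 < n ∧ r = (p (h + n • z) - f h) / n})
    ⟨_, 0, 1, one_pos, rfl⟩ ⟨_, 0, 1, one_pos, rfl⟩ <| by
      rintro _ ⟨h₁, n₁, hn₁, rfl⟩ _ ⟨h₂, n₂, hn₂, rfl⟩
      exact sub_div_le_div_sub_of_le_sublinear hp_nsmul hp_add hf z h₁ h₂ hn₁ hn₂
  refine ⟨v, fun h m ↦ ?_⟩
  obtain ⟨n, rfl | rfl⟩ := m.eq_nat_or_neg <;> rcases n.eq_zero_or_pos with rfl | hn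
  · simpa using hf h
  · have := hup ⟨h, n, hn, rfl⟩
    rw [le_div_iff₀ (by positivity)] at this
    rw [natCast_zsmul]
    push_cast
    linarith
  · simpa using hf h
  · have := hlow ⟨h, n, hn, rfl⟩
    rw [div_le_iff₀ (by positivity)] at this
    rw [neg_smul, natCast_zsmul, ← sub_eq_add_neg]
    push_cast
    linarith

theorem exists_extension_mem_domain_of_le_sublinear {f : G →ₗ.[ℤ] ℝ}
    (hf : ∀ x : f.domain, f x ≤ p x) (z : G) :
    ∃ g : G →ₗ.[ℤ] ℝ, f ≤ g ∧ z ∈ g.domain ∧ ∀ x : g.domain, g x ≤ p x := by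
  have hp0 : p 0 = 0 := by simpa using hp_nsmul 0 0
  obtain ⟨v, hv⟩ := exists_add_mul_le_of_le_sublinear hp_nsmul hp_add hf z
  -- `z` may be torsion modulo `f.domain`; the two-sided bound makes `c • z ↦ c * v` agree with `f`
  have hfv : ∀ (h : f.domain) (c : ℤ), (h : G) = c • z → f h = c * v := by
    intro h c hc
    have h₁ := hv h (-c)
    have h₂ := hv (-h) c
    rw [neg_smul, hc, add_neg_cancel, hp0] at h₁
    rw [Submodule.coe_neg, hc, neg_add_cancel, hp0, LinearPMap.map_neg] at h₂
    push_cast at h₁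
    linarith
  have H0 : ∀ c : ℤ, c • z = 0 → c • v = 0 := fun c hc ↦ by
    simpa [eq_comm] using hfv 0 c hc.symm
  set g := LinearPMap.mkSpanSingleton' (σ := RingHom.id ℤ) z v H0
  have compat : ∀ (x : f.domain) (y : g.domain), (x : G) = y → f x = g y := by
    rintro x ⟨y, hy⟩ hxy
    obtain ⟨c, rfl⟩ := Submodule.mem_span_singleton.1 hy
    rw [LinearPMap.mkSpanSingleton'_apply, hfv x c hxy, zsmul_eq_mul]
    rfl
  refine ⟨f.sup g compat, f.left_le_sup g compat,
    Submodule.mem_sup_right (Submodule.mem_span_singleton_self z), ?_⟩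
  rintro ⟨x, hx⟩
  obtain ⟨a, ha, b, hb, rfl⟩ := Submodule.mem_sup.1 hx
  obtain ⟨c, rfl⟩ := Submodule.mem_span_singleton.1 hb
  refine (LinearPMap.sup_apply compat ⟨a, ha⟩ ⟨c • z, hb⟩ ⟨a + c • z, hx⟩ rfl).trans_le ?_
  rw [LinearPMap.mkSpanSingleton'_apply, zsmul_eq_mul]
  exact hv ⟨a, ha⟩ c

theorem exists_addMonoidHom_extension_of_le_sublinear (f : G →ₗ.[ℤ] ℝ)
    (hf : ∀ x : f.domain, f x ≤ p x) :
    ∃ φ : G →+ ℝ, (∀ x : f.domain, φ x = f x) ∧ ∀ x, φ x ≤ p x := by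
  set S := {g : G →ₗ.[ℤ] ℝ | ∀ x : g.domain, g x ≤ p x}
  have hS : ∀ c ⊆ S, IsChain (· ≤ ·) c → ∀ g ∈ c, ∃ ub ∈ S, ∀ g' ∈ c, g' ≤ ub := by
    intro c hcS hc g hg
    have hcd : DirectedOn (· ≤ ·) c := hc.directedOn
    refine ⟨LinearPMap.sSup c hcd, ?_, fun _ ↦ LinearPMap.le_sSup hcd⟩
    rintro ⟨x, hx⟩
    have hdir : DirectedOn (· ≤ ·) (LinearPMap.domain '' c) :=
      directedOn_image.2 (hcd.mono LinearPMap.domain_mono.monotone)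
    obtain ⟨_, ⟨g', hg'c, rfl⟩, hxg'⟩ :=
      (Submodule.mem_sSup_of_directed (Set.Nonempty.image _ ⟨g, hg⟩) hdir).1 hx
    rw [LinearPMap.sSup_apply hcd hg'c ⟨x, hxg'⟩]
    exact hcS hg'c ⟨x, hxg'⟩
  obtain ⟨q, hfq, hq⟩ := zorn_le_nonempty₀ S hS f hf
  have hq_top : ∀ z, z ∈ q.domain := fun z ↦ by
    obtain ⟨g, hqg, hz, hg⟩ := exists_extension_mem_domain_of_le_sublinear hp_nsmul hp_add hq.prop z
    exact (hq.le_of_ge hg hqg).1 hz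
  refine ⟨AddMonoidHom.mk' (fun x ↦ q ⟨x, hq_top x⟩) fun x y ↦ ?_, fun x ↦ (hfq.2 rfl).symm,
    fun x ↦ hq.prop ⟨x, hq_top x⟩⟩
  exact LinearPMap.map_add q ⟨x, hq_top x⟩ ⟨y, hq_top y⟩

theorem exists_addMonoidHom_le_sublinear_eq (y : G) :
    ∃ φ : G →+ ℝ, (∀ x, φ x ≤ p x) ∧ φ y = p y := by
  have hp0 : p 0 = 0 := by simpa using hp_nsmul 0 0
  have hpy : ∀ c : ℤ, c * p y ≤ p (c • y) := by
    intro c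
    obtain ⟨n, rfl | rfl⟩ := c.eq_nat_or_neg
    · rw [natCast_zsmul, hp_nsmul]
      rfl
    · have := hp_add y (-y)
      rw [add_neg_cancel, hp0] at this
      rw [neg_smul, natCast_zsmul, ← smul_neg, hp_nsmul]
      push_cast
      nlinarith [(n.cast_nonneg : (0 : ℝ) ≤ n)]
  have H0 : ∀ c : ℤ, c • y = 0 → c • p y = 0 := fun c hc ↦ by
    have h₁ := hpy c
    have h₂ := hpy (-c)
    rw [neg_smul, hc, neg_zero, hp0] at h₂
    rw [hc, hp0] at h₁
    rw [zsmul_eq_mul]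
    push_cast at h₂
    linarith
  obtain ⟨φ, hφf, hφp⟩ := exists_addMonoidHom_extension_of_le_sublinear hp_nsmul hp_add
    (LinearPMap.mkSpanSingleton' (σ := RingHom.id ℤ) y (p y) H0) <| by
      rintro ⟨x, hx⟩
      obtain ⟨c, rfl⟩ := Submodule.mem_span_singleton.1 hx
      rw [LinearPMap.mkSpanSingleton'_apply, zsmul_eq_mul]
      exact hpy c
  refine ⟨φ, hφp, ?_⟩
  rw [← LinearPMap.mkSpanSingleton'_apply_self (σ := RingHom.id ℤ) y (p y) H0]
  exact hφf ⟨y, Submodule.mem_span_singleton_self y⟩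

end IntegerHahnBanach

theorem AddMonoidHom.continuous_of_le_of_mem_nhds {G : Type*} [AddCommGroup G]
    [TopologicalSpace G] [IsTopologicalAddGroup G] (φ : G →+ ℝ) {U : Set G} (hU : U ∈ 𝓝 0) {C : ℝ}
    (hφ : ∀ x ∈ U, φ x ≤ C) : Continuous φ := by
  have hC : 0 ≤ C := by simpa using hφ 0 (mem_of_mem_nhds hU)
  refine continuous_of_continuousAt_zero φ ?_
  rw [ContinuousAt, map_zero, Metric.tendsto_nhds]
  intro ε hε
  obtain ⟨n, hn⟩ := exists_nat_gt (C / ε)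
  have hn₀ : (0 : ℝ) < n := (div_nonneg hC hε.le).trans_lt hn
  have hCn : C < n * ε := (div_lt_iff₀ hε).1 hn
  have hnU : ∀ᶠ x in 𝓝 (0 : G), n • x ∈ U ∩ -U :=
    ((continuous_nsmul n).tendsto' 0 0 (nsmul_zero n)).eventually
      (inter_mem hU (neg_mem_nhds_zero G hU))
  filter_upwards [hnU] with x ⟨hx, hx'⟩
  have h₁ := hφ _ hx
  have h₂ := hφ _ hx'
  rw [map_nsmul, nsmul_eq_mul] at h₁
  rw [map_neg, map_nsmul, nsmul_eq_mul] at h₂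
  rw [Real.dist_0_eq_abs, abs_lt]
  constructor <;> nlinarith

section Geometry

variable {G : Type*} [AddCommGroup G] [TopologicalSpace G] [IsTopologicalAddGroup G]

theorem IsCompact.nsmul {V : Set G} (hV : IsCompact V) (n : ℕ) : IsCompact (n • V) := by
  induction n with
  | zero => simp
  | succ n ih => rw [succ_nsmul]; exact ih.add hV

theorem exists_notMem_nsmul_of_isCompact (hG : ¬CompactSpace G) {W : Set G} (hW : IsCompact W)
    (n : ℕ) : ∃ x, x ∉ n • W := by
  by_contra! h
  exact hG ⟨by simpa [Set.eq_univ_of_forall h] using hW.nsmul n⟩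

/- Of the more than `#t * 2k` letters of a geodesic word, `2k` lie in the same translate
`V - g`; their sum is still geodesic, yet within `k` steps of `k • -(2 • g)`. -/
theorem exists_mem_le_wordLength_nsmul (hG : ¬CompactSpace G) {V : Set G} (hV : IsCompact V)
    (hV0 : (0 : G) ∈ V) (hgen : ∀ x, ∃ n : ℕ, x ∈ n • V) {t : Finset G}
    (ht : 2 • V ⊆ ⋃ g ∈ t, (g + ·) ⁻¹' V) (k : ℕ) :
    ∃ g ∈ t, k ≤ wordLength (2 • V) (k • -(2 • g)) := by
  classical
  have hW0 : (0 : G) ∈ 2 • V := Set.subset_nsmul hV0 two_ne_zero hV0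
  have hWgen := exists_mem_nsmul_nsmul hV0 hgen two_pos
  obtain ⟨x, hx⟩ := exists_notMem_nsmul_of_isCompact hG (hV.nsmul 2) (t.card * (2 * k))
  have hlen := lt_wordLength_of_notMem_nsmul hWgen hW0 hx
  obtain ⟨v, hv⟩ := Set.mem_nsmul.1 (mem_nsmul_wordLength hWgen x)
  rw [List.sum_ofFn] at hv
  have hnet : ∀ i, ∃ g ∈ t, g + v i ∈ V := fun i ↦ by
    simpa using ht (v i).2
  choose c hct hcV using hnet
  obtain ⟨g, hgt, hfiber⟩ := Finset.exists_le_card_fiber_of_mul_le_card_of_maps_to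
    (s := Finset.univ) (n := 2 * k) (fun i _ ↦ hct i) ⟨c ⟨0, by omega⟩, hct _⟩
    (by simpa using hlen.le)
  obtain ⟨T, hTfiber, hTcard⟩ := Finset.exists_subset_card_eq hfiber
  have hgeod : 2 * k ≤ wordLength (2 • V) (∑ i ∈ T, (v i : G)) := by
    rw [← hTcard]
    exact card_le_wordLength_sum hWgen (fun i ↦ (v i).2) (by simp [hv]) T
  have hshift : wordLength (2 • V) (∑ i ∈ T, (v i : G) + k • 2 • g) ≤ k := by
    refine wordLength_le_of_mem_nsmul ?_
    have hsum : ∑ i ∈ T, (v i : G) + k • 2 • g = ∑ i ∈ T, (c i + v i) := by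
      rw [Finset.sum_add_distrib, add_comm, ← mul_nsmul, ← hTcard, ← Finset.sum_const]
      congr 1
      exact Finset.sum_congr rfl fun i hi ↦ (Finset.mem_filter.1 (hTfiber hi)).2.symm
    rw [hsum, ← mul_nsmul, ← hTcard]
    simpa using Set.finsetSum_mem_finsetSum T (fun _ ↦ V) _ fun i _ ↦ hcV i
  have := wordLength_add_le hWgen (∑ i ∈ T, (v i : G) + k • 2 • g) (k • -(2 • g))
  rw [smul_neg, add_neg_cancel_right] at this
  refine ⟨g, hgt, ?_⟩
  rw [smul_neg]
  omega

theorem exists_one_le_stableNorm_wordLength (hG : ¬CompactSpace G) {V : Set G}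
    (hV : IsCompact V) (hV0 : V ∈ 𝓝 0) (hgen : ∀ x, ∃ n : ℕ, x ∈ n • V) :
    ∃ y, 1 ≤ stableNorm (fun x ↦ (wordLength (2 • V) x : ℝ)) y := by
  have hWgen := exists_mem_nsmul_nsmul (mem_of_mem_nhds hV0) hgen two_pos
  obtain ⟨t, ht⟩ :=
    compact_covered_by_add_left_translates (hV.nsmul 2) ⟨0, mem_interior_iff_mem_nhds.2 hV0⟩
  obtain ⟨g, -, hg⟩ : ∃ g ∈ t, ∃ᶠ k : ℕ in atTop, k ≤ wordLength (2 • V) (k • -(2 • g)) := by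
    by_contra! h
    obtain ⟨k, hk⟩ := ((eventually_all_finset t).2 h).exists
    obtain ⟨g, hgt, hg⟩ :=
      exists_mem_le_wordLength_nsmul hG hV (mem_of_mem_nhds hV0) hgen ht k
    exact (hk g hgt).not_ge hg
  refine ⟨-(2 • g),
    le_stableNorm_of_frequently (fun x y ↦ ?_) (fun x ↦ Nat.cast_nonneg _) ?_⟩
  · exact_mod_cast wordLength_add_le hWgen x y
  · exact hg.mono fun k hk ↦ by simpa using (Nat.cast_le (α := ℝ)).2 hk

theorem exists_continuous_addMonoidHom_real_ne_zero [LocallyCompactSpace G]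
    (hK : ∃ K : Set G, IsCompact K ∧ AddSubgroup.closure K = ⊤) (hG : ¬CompactSpace G) :
    ∃ φ : G →+ ℝ, Continuous φ ∧ ∃ y, φ y ≠ 0 := by
  obtain ⟨K, hKc, hKtop⟩ := hK
  obtain ⟨V, hV, hV0, hKV, hVneg⟩ : ∃ V : Set G, IsCompact V ∧ V ∈ 𝓝 0 ∧ K ⊆ V ∧ -V ⊆ V := by
    obtain ⟨N, hNc, hN⟩ := exists_compact_mem_nhds (0 : G)
    refine ⟨(K ∪ N) ∪ -(K ∪ N), (hKc.union hNc).union (hKc.union hNc).neg,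
      mem_of_superset hN fun x hx ↦ Or.inl (Or.inr hx), fun x hx ↦ Or.inl (Or.inl hx), ?_⟩
    rw [Set.union_neg, neg_neg, Set.union_comm]
  have hgen := exists_mem_nsmul_of_closure_eq_top hKV hVneg hKtop
  have hWgen := exists_mem_nsmul_nsmul (mem_of_mem_nhds hV0) hgen two_pos
  have hℓ : ∀ x y,
      (wordLength (2 • V) (x + y) : ℝ) ≤ wordLength (2 • V) x + wordLength (2 • V) y :=
    fun x y ↦ mod_cast wordLength_add_le hWgen x y
  have hℓ0 : ∀ x, (0 : ℝ) ≤ wordLength (2 • V) x := fun x ↦ Nat.cast_nonneg _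
  obtain ⟨y, hy⟩ := exists_one_le_stableNorm_wordLength hG hV hV0 hgen
  obtain ⟨φ, hφp, hφy⟩ :=
    exists_addMonoidHom_le_sublinear_eq (stableNorm_nsmul hℓ hℓ0) (stableNorm_add_le hℓ hℓ0) y
  refine ⟨φ, φ.continuous_of_le_of_mem_nhds (C := 1)
    (mem_of_superset hV0 (Set.subset_nsmul (mem_of_mem_nhds hV0) two_ne_zero)) fun x hx ↦ ?_,
    y, by linarith⟩
  calc φ x ≤ stableNorm (fun x ↦ (wordLength (2 • V) x : ℝ)) x := hφp x
    _ ≤ wordLength (2 • V) x := stableNorm_le hℓ hℓ0 x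
    _ ≤ 1 := mod_cast wordLength_le_one_of_mem hx

end Geometry

theorem norm_eq_one_of_bddAbove {M 𝕜 : Type*} [AddGroup M] [NormedDivisionRing 𝕜]
    {α : M → 𝕜} (hα0 : ∀ x, α x ≠ 0) (hα : ∀ s t, α (s + t) = α s * α t)
    (hbdd : BddAbove (Set.range fun x ↦ ‖α x‖)) (s : M) : ‖α s‖ = 1 := by
  have h0 : α 0 = 1 := by
    have := hα 0 0
    rw [add_zero, eq_comm, mul_eq_left₀ (hα0 0)] at this
    exact this
  have hpow : ∀ (n : ℕ) (s : M), α (n • s) = α s ^ n := fun n s ↦ by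
    induction n with
    | zero => simp [h0]
    | succ n ih => rw [succ_nsmul, hα, ih, pow_succ]
  have hle : ∀ s, ‖α s‖ ≤ 1 := fun s ↦ by
    by_contra! h
    obtain ⟨C, hC⟩ := hbdd
    obtain ⟨n, hn⟩ := pow_unbounded_of_one_lt C h
    exact (hC ⟨n • s, rfl⟩).not_gt (by simpa only [hpow, norm_pow] using hn)
  have hmul : ‖α s‖ * ‖α (-s)‖ = 1 := by
    rw [← norm_mul, ← hα, add_neg_cancel, h0, norm_one]
  nlinarith [hle s, hle (-s), norm_nonneg (α s), norm_nonneg (α (-s))]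

theorem stmt_9_general {G : Type*} [AddCommGroup G] [TopologicalSpace G] [IsTopologicalAddGroup G]
    [LocallyCompactSpace G]
    (hK : ∃ K : Set G, IsCompact K ∧ AddSubgroup.closure K = ⊤) :
    (∀ α : G → ℂ, Continuous α → (∀ x, α x ≠ 0) → (∀ s t, α (s + t) = α s * α t) →
      ∀ s, ‖α s‖ = 1) ↔ CompactSpace G := by
  refine ⟨fun hunit ↦ ?_, fun _ α hα hα0 hmul ↦
    norm_eq_one_of_bddAbove hα0 hmul (isCompact_range (continuous_norm.comp hα)).bddAbove⟩
  by_contra hG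
  obtain ⟨φ, hφ, y, hy⟩ := exists_continuous_addMonoidHom_real_ne_zero hK hG
  have := hunit (fun x ↦ Complex.exp (φ x)) (by fun_prop) (fun x ↦ Complex.exp_ne_zero _)
    (fun s t ↦ by simp [Complex.exp_add]) y
  rw [Complex.norm_exp_ofReal, Real.exp_eq_one_iff] at this
  exact hy this

theorem stmt_9 {G : Type*} [AddCommGroup G] [TopologicalSpace G] [IsTopologicalAddGroup G]
    [T2Space G] [LocallyCompactSpace G]
    (hK : ∃ K : Set G, IsCompact K ∧ AddSubgroup.closure K = ⊤) :
    (∀ α : G → ℂ, Continuous α → (∀ x, α x ≠ 0) → (∀ s t, α (s + t) = α s * α t) →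
      ∀ s, ‖α s‖ = 1) ↔ CompactSpace G :=
  stmt_9_general hK
end

section
/- Let G be a locally compact abelian group and φ a nonzero multiplicative linear functional on the convolution algebra C_c(G). Fix f ∈ C_c(G) with φ(f) ≠ 0 and define α(s) = φ(τ_s f) / φ(f). Then α is a group homomorphism from G to ℂ*: α(s + t) = α(s) α(t) for all s, t ∈ G, and α does not depend on the choice of f (if φ(g) ≠ 0 then φ(τ_s f) φ(g) = φ(f) φ(τ_s g) for all s). -/
/-!
Convolution commutes with translation, `τ_s f ∗ g = τ_s (f ∗ g) = f ∗ τ_s g`, so multiplicativity of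
`φ` gives `φ(τ_s f) φ(g) = φ(f) φ(τ_s g)`. Taking `g = τ_t f` and dividing by `φ(f)²` yields
`α(s + t) = α(s) α(t)`.
-/

open MeasureTheory

section Translation

variable {G : Type*} [AddCommGroup G]

theorem HasCompactSupport.comp_sub_right [TopologicalSpace G] [IsTopologicalAddGroup G]
    {M : Type*} [Zero M] {f : G → M} (hf : HasCompactSupport f) (s : G) :
    HasCompactSupport fun u => f (u - s) :=
  hf.comp_homeomorph (Homeomorph.subRight s)

theorem integral_translate_mul_eq_integral_mul_translate [MeasurableSpace G] [MeasurableAdd G]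
    (μ : Measure G) [μ.IsAddRightInvariant] (f g : G → ℂ) (s t : G) :
    ∫ u, f (u - s) * g (t - u) ∂μ = ∫ u, f u * g (t - u - s) ∂μ := by
  rw [← integral_sub_right_eq_self (fun u => f u * g (t - u - s)) s]
  simp only [sub_sub, sub_add_cancel]

end Translation

section MultiplicativeFunctional

variable {G : Type*} [AddCommGroup G] [TopologicalSpace G] [IsTopologicalAddGroup G]
  [MeasurableSpace G] [MeasurableAdd G] {μ : Measure G} [μ.IsAddRightInvariant]
  {φ : (G → ℂ) → ℂ}

theorem map_translate_mul_eq_mul_map_translate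
    (hmul : ∀ f g : G → ℂ, Continuous f → HasCompactSupport f → Continuous g →
      HasCompactSupport g → φ (fun t => ∫ s, f s * g (t - s) ∂μ) = φ f * φ g)
    {f g : G → ℂ} (hf : Continuous f) (hfs : HasCompactSupport f) (hg : Continuous g)
    (hgs : HasCompactSupport g) (s : G) :
    φ (fun u => f (u - s)) * φ g = φ f * φ (fun u => g (u - s)) := by
  rw [← hmul (fun u => f (u - s)) g (hf.comp (continuous_sub_right s)) (hfs.comp_sub_right s) hg hgs,
    ← hmul f (fun u => g (u - s)) hf hfs (hg.comp (continuous_sub_right s)) (hgs.comp_sub_right s)]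
  simp only [integral_translate_mul_eq_integral_mul_translate]

theorem map_translate_add_div_eq_mul
    (hmul : ∀ f g : G → ℂ, Continuous f → HasCompactSupport f → Continuous g →
      HasCompactSupport g → φ (fun t => ∫ s, f s * g (t - s) ∂μ) = φ f * φ g)
    {f : G → ℂ} (hf : Continuous f) (hfs : HasCompactSupport f) (hφf : φ f ≠ 0) (s t : G) :
    φ (fun u => f (u - (s + t))) / φ f =
      (φ (fun u => f (u - s)) / φ f) * (φ (fun u => f (u - t)) / φ f) := by
  have key := map_translate_mul_eq_mul_map_translate (g := fun u => f (u - t)) hmul hf hfs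
    (hf.comp (continuous_sub_right t)) (hfs.comp_sub_right t) s
  simp only [sub_sub] at key
  rw [div_mul_div_comm, key, mul_div_mul_left _ _ hφf]

end MultiplicativeFunctional

theorem stmt_16_general {G : Type*} [AddCommGroup G] [TopologicalSpace G] [IsTopologicalAddGroup G]
    [MeasurableSpace G] [BorelSpace G]
    (μ : Measure G) [μ.IsAddHaarMeasure]
    (φ : (G → ℂ) → ℂ)
    (hmul : ∀ f g : G → ℂ, Continuous f → HasCompactSupport f → Continuous g →
      HasCompactSupport g → φ (fun t => ∫ s, f s * g (t - s) ∂μ) = φ f * φ g)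
    (f : G → ℂ) (hf : Continuous f) (hfs : HasCompactSupport f) (hφf : φ f ≠ 0) :
    (∀ s t : G, φ (fun u => f (u - (s + t))) / φ f =
        (φ (fun u => f (u - s)) / φ f) * (φ (fun u => f (u - t)) / φ f)) ∧
      ∀ g : G → ℂ, Continuous g → HasCompactSupport g → φ g ≠ 0 →
        ∀ s : G, φ (fun u => f (u - s)) * φ g = φ f * φ (fun u => g (u - s)) :=
  ⟨map_translate_add_div_eq_mul hmul hf hfs hφf,
    fun _ hg hgs _ => map_translate_mul_eq_mul_map_translate hmul hf hfs hg hgs⟩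

theorem stmt_16 {G : Type*} [AddCommGroup G] [TopologicalSpace G] [IsTopologicalAddGroup G]
    [LocallyCompactSpace G] [MeasurableSpace G] [BorelSpace G]
    (μ : Measure G) [μ.IsAddHaarMeasure]
    (φ : (G → ℂ) → ℂ)
    (hadd : ∀ f g : G → ℂ, Continuous f → HasCompactSupport f → Continuous g →
      HasCompactSupport g → φ (f + g) = φ f + φ g)
    (hsmul : ∀ (c : ℂ) (f : G → ℂ), Continuous f → HasCompactSupport f →
      φ (c • f) = c * φ f)
    (hmul : ∀ f g : G → ℂ, Continuous f → HasCompactSupport f → Continuous g →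
      HasCompactSupport g → φ (fun t => ∫ s, f s * g (t - s) ∂μ) = φ f * φ g)
    (hne : ∃ h : G → ℂ, Continuous h ∧ HasCompactSupport h ∧ φ h ≠ 0)
    (f : G → ℂ) (hf : Continuous f) (hfs : HasCompactSupport f) (hφf : φ f ≠ 0) :
    (∀ s t : G, φ (fun u => f (u - (s + t))) / φ f =
        (φ (fun u => f (u - s)) / φ f) * (φ (fun u => f (u - t)) / φ f)) ∧
      ∀ g : G → ℂ, Continuous g → HasCompactSupport g → φ g ≠ 0 →
        ∀ s : G, φ (fun u => f (u - s)) * φ g = φ f * φ (fun u => g (u - s)) :=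
  stmt_16_general μ φ hmul f hf hfs hφf
end

section
/- Let G be a second countable locally compact abelian group. Then the map α ↦ φ_α, where φ_α(f) = ∫_G f(s) α(s) dλ(s), is a bijection from the set H(G) of continuous homomorphisms G → ℂ* onto the Gel'fand space of the convolution algebra C_c(G) (the set of nonzero multiplicative linear functionals on C_c(G) that are continuous for the inductive limit topology). -/
/-!
Integration against a continuous character `α` is bounded on functions supported in a fixed
compact set, and multiplicative on `C_c(G)` because `(f ⋆ g) α = (f α) ⋆ (g α)`; a continuous
function is determined by its integrals against `C_c(G)`, which gives injectivity and `φ_α ≠ 0`.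

Conversely, pick `g` with `φ g ≠ 0` and put `α a = φ (τ a g) / φ g`. Multiplicativity of `φ`
together with `τ a g ⋆ τ b g = τ (a + b) g ⋆ g` makes `α` a character. On the bounded continuous
functions vanishing off a compact set `K`, a Banach space, `φ` is a continuous linear functional.
Since `a ↦ τ a g` is continuous for the sup norm, `α` is continuous, and `f ⋆ g` is the Bochner
integral of `s ↦ f s • τ s g` in such a space, so
`φ f * φ g = φ (f ⋆ g) = ∫ f s * φ (τ s g) = φ g * ∫ f α`.
-/

open MeasureTheory

/-- `φ` is a nonzero multiplicative linear functional on the convolution algebra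
`C_c(G)` that is continuous for the inductive limit topology (equivalently, bounded
on the functions supported in each fixed compact set). -/
def IsGelfandFunctional {G : Type*} [AddCommGroup G] [TopologicalSpace G]
    [MeasurableSpace G] (μ : Measure G) (φ : (G → ℂ) → ℂ) : Prop :=
  (∀ f g : G → ℂ, Continuous f → HasCompactSupport f → Continuous g →
      HasCompactSupport g → φ (f + g) = φ f + φ g) ∧
  (∀ (c : ℂ) (f : G → ℂ), Continuous f → HasCompactSupport f → φ (c • f) = c * φ f) ∧
  (∀ f g : G → ℂ, Continuous f → HasCompactSupport f → Continuous g →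
      HasCompactSupport g → φ (fun t => ∫ s, f s * g (t - s) ∂μ) = φ f * φ g) ∧
  (∃ h : G → ℂ, Continuous h ∧ HasCompactSupport h ∧ φ h ≠ 0) ∧
  (∀ K : Set G, IsCompact K → ∃ C : ℝ, ∀ f : G → ℂ, Continuous f → tsupport f ⊆ K →
      ‖φ f‖ ≤ C * ⨆ t : G, ‖f t‖)

/-- `α` is a generalized character on `G`. -/
def IsGenChar {G : Type*} [AddCommGroup G] [TopologicalSpace G] (α : G → ℂ) : Prop :=
  Continuous α ∧ (∀ x, α x ≠ 0) ∧ ∀ s t, α (s + t) = α s * α t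

open Filter Topology ComplexConjugate Convolution Pointwise
open scoped BoundedContinuousFunction CompactlySupported

section IntegralAgainstContinuous

variable {X : Type*} [TopologicalSpace X] [MeasurableSpace X] {μ : Measure X}

lemma exists_norm_integral_mul_le [IsFiniteMeasureOnCompacts μ] {α : X → ℂ}
    (hα : Continuous α) {K : Set X} (hK : IsCompact K) :
    ∃ C : ℝ, ∀ f : X → ℂ, Continuous f → tsupport f ⊆ K →
      ‖∫ s, f s * α s ∂μ‖ ≤ C * ⨆ t, ‖f t‖ := by
  obtain ⟨M, hM⟩ := hK.exists_bound_of_continuousOn hα.continuousOn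
  refine ⟨M * μ.real K, fun f hf hfK => ?_⟩
  have hbdd : BddAbove (Set.range fun t => ‖f t‖) :=
    hf.norm.bddAbove_range_of_hasCompactSupport
      (show HasCompactSupport f from hK.of_isClosed_subset (isClosed_tsupport f) hfK).norm
  have hvanish : ∀ s ∉ K, f s * α s = 0 := fun s hs => by
    rw [image_eq_zero_of_notMem_tsupport (fun h => hs (hfK h)), zero_mul]
  rw [← setIntegral_eq_integral_of_forall_compl_eq_zero hvanish]
  calc ‖∫ s in K, f s * α s ∂μ‖ ≤ (⨆ t, ‖f t‖) * M * μ.real K :=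
        norm_setIntegral_le_of_norm_le_const hK.measure_lt_top fun s hs => by
          rw [norm_mul]
          exact mul_le_mul (le_ciSup hbdd s) (hM s hs) (norm_nonneg _)
            ((norm_nonneg _).trans (le_ciSup hbdd s))
    _ = M * μ.real K * ⨆ t, ‖f t‖ := by ring

variable [RegularSpace X] [LocallyCompactSpace X] [OpensMeasurableSpace X] [μ.IsOpenPosMeasure]
  [IsFiniteMeasureOnCompacts μ]

lemma eq_zero_of_forall_integral_mul_eq_zero {α : X → ℂ} (hα : Continuous α)
    (h : ∀ f : X → ℂ, Continuous f → HasCompactSupport f → ∫ s, f s * α s ∂μ = 0) :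
    α = 0 := by
  funext x
  by_contra hx
  rw [Pi.zero_apply] at hx
  obtain ⟨χ, hχx, -, hχs, hχ01⟩ := exists_continuous_one_zero_of_isCompact
    isCompact_singleton isClosed_empty (Set.disjoint_empty {x})
  have hpos : 0 < ∫ s, χ s * ‖α s‖ ^ 2 ∂μ :=
    (χ.continuous.mul (hα.norm.pow 2)).integral_pos_of_hasCompactSupport_nonneg_nonzero
      hχs.mul_right (fun s => mul_nonneg (hχ01 s).1 (by positivity)) (x := x)
      (by simp [hχx rfl, hx])
  have htest := h (fun s => χ s * conj (α s))
    ((Complex.continuous_ofReal.comp χ.continuous).mul (Complex.continuous_conj.comp hα))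
    (hχs.comp_left Complex.ofReal_zero).mul_right
  have hconj : ∀ s, χ s * conj (α s) * α s = ((χ s * ‖α s‖ ^ 2 : ℝ) : ℂ) := fun s => by
    rw [mul_assoc, RCLike.conj_mul]
    push_cast
    rfl
  simp only [hconj, integral_complex_ofReal, Complex.ofReal_eq_zero] at htest
  exact hpos.ne' htest

lemma eq_of_forall_integral_mul_eq {α β : X → ℂ} (hα : Continuous α) (hβ : Continuous β)
    (h : ∀ f : X → ℂ, Continuous f → HasCompactSupport f →
      ∫ s, f s * α s ∂μ = ∫ s, f s * β s ∂μ) :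
    α = β := by
  refine sub_eq_zero.1 <|
    eq_zero_of_forall_integral_mul_eq_zero (μ := μ) (hα.sub hβ) fun f hf hfs => ?_
  have hint {γ : X → ℂ} (hγ : Continuous γ) : Integrable (fun s => f s * γ s) μ :=
    (hf.mul hγ).integrable_of_hasCompactSupport hfs.mul_right
  simp only [Pi.sub_apply, mul_sub]
  rw [integral_sub (hint hα) (hint hβ), h f hf hfs, sub_self]

end IntegralAgainstContinuous

section Convolution

variable {G : Type*} [AddCommGroup G] [MeasurableSpace G] [MeasurableAdd₂ G] [MeasurableNeg G]
  {μ : Measure G} [SFinite μ] [μ.IsAddRightInvariant]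

lemma integral_convolution_mul_of_map_add {f g α : G → ℂ}
    (hα : ∀ s t, α (s + t) = α s * α t) (hf : Integrable (fun s => f s * α s) μ)
    (hg : Integrable (fun s => g s * α s) μ) :
    ∫ t, (∫ s, f s * g (t - s) ∂μ) * α t ∂μ = (∫ s, f s * α s ∂μ) * ∫ s, g s * α s ∂μ := by
  have hconv : ∀ t, (∫ s, f s * g (t - s) ∂μ) * α t =
      ((fun s => f s * α s) ⋆[ContinuousLinearMap.mul ℂ ℂ, μ] fun s => g s * α s) t := by
    intro t
    rw [convolution_mul, ← integral_mul_const]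
    congr 1 with s
    rw [show t = s + (t - s) by abel, hα]
    simp only [add_sub_cancel_left]
    ring
  simp_rw [hconv]
  exact integral_convolution _ hf hg

end Convolution

section SupportedIn

variable {X : Type*} [TopologicalSpace X]

def bcfSupportedIn (K : Set X) : Submodule ℂ (X →ᵇ ℂ) where
  carrier := {h | ∀ x ∉ K, h x = 0}
  add_mem' ha hb x hx := by simp [ha x hx, hb x hx]
  zero_mem' _ _ := rfl
  smul_mem' c h hh x hx := by simp [hh x hx]

lemma isClosed_bcfSupportedIn (K : Set X) : IsClosed (bcfSupportedIn K : Set (X →ᵇ ℂ)) := by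
  have : (bcfSupportedIn K : Set (X →ᵇ ℂ)) = ⋂ x ∈ Kᶜ, {h | h x = 0} := by
    ext h
    simp only [Set.mem_iInter, Set.mem_ofPred_eq, Set.mem_compl_iff]
    rfl
  rw [this]
  exact isClosed_biInter fun x _ => isClosed_eq (continuous_eval_const x) continuous_const

instance (K : Set X) : CompleteSpace (bcfSupportedIn K) :=
  (isClosed_bcfSupportedIn K).completeSpace_coe

end SupportedIn

section Translate

open scoped translate

variable {G : Type*} [AddCommGroup G] [TopologicalSpace G] [IsTopologicalAddGroup G]
  {β : Type*} [PseudoMetricSpace β]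

def BoundedContinuousFunction.translate (g : G →ᵇ β) (a : G) : G →ᵇ β :=
  g.compContinuous ⟨(· - a), continuous_sub_right a⟩

lemma HasCompactSupport.exists_boundedContinuousFunction_eq {X : Type*} [TopologicalSpace X]
    [Zero β] {g : X → β} (hgs : HasCompactSupport g) (hg : Continuous g) :
    ∃ g' : X →ᵇ β, ⇑g' = g :=
  ⟨(⟨⟨g, hg⟩, hgs⟩ : C_c(X, β)).toBoundedContinuousFunction, rfl⟩

variable [Zero β]

lemma HasCompactSupport.exists_mem_nhds_zero_dist_lt {g : G → β} (hgs : HasCompactSupport g)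
    (hg : Continuous g) {ε : ℝ} (hε : 0 < ε) :
    ∃ U ∈ 𝓝 (0 : G), ∀ a b : G, b - a ∈ U → dist (g a) (g b) < ε := by
  let : UniformSpace G := IsTopologicalAddGroup.rightUniformSpace G
  have : IsUniformAddGroup G := isUniformAddGroup_of_addCommGroup
  have huc := hgs.uniformContinuous_of_continuous hg (Metric.dist_mem_uniformity hε)
  rw [uniformity_eq_comap_nhds_zero G, mem_map, mem_comap] at huc
  obtain ⟨U, hU, hsub⟩ := huc
  exact ⟨U, hU, fun a b hab => hsub (a := (a, b)) hab⟩

lemma BoundedContinuousFunction.continuous_translate {g : G →ᵇ β} (hgs : HasCompactSupport g) :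
    Continuous g.translate := by
  refine continuous_iff_continuousAt.2 fun a₀ => Metric.tendsto_nhds.2 fun ε hε => ?_
  obtain ⟨U, hU, hUdist⟩ := hgs.exists_mem_nhds_zero_dist_lt g.continuous (half_pos hε)
  have hnear : ∀ᶠ a in 𝓝 a₀, a - a₀ ∈ U :=
    (continuous_sub_right a₀).continuousAt.preimage_mem_nhds (by rwa [sub_self])
  filter_upwards [hnear] with a ha
  refine lt_of_le_of_lt ((dist_le (half_pos hε).le).2 fun t => ?_) (half_lt_self hε)
  exact (hUdist (t - a) (t - a₀) (by rwa [sub_sub_sub_cancel_left])).le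

lemma HasCompactSupport.translate {M : Type*} [Zero M] {g : G → M}
    (hgs : HasCompactSupport g) (a : G) : HasCompactSupport (τ a g) :=
  hgs.comp_homeomorph (Homeomorph.subRight a)

lemma BoundedContinuousFunction.translate_mem_bcfSupportedIn (g : G →ᵇ ℂ) {A : Set G} {a : G}
    (ha : a ∈ A) : g.translate a ∈ bcfSupportedIn (A + tsupport g) := by
  intro t ht
  by_contra hne
  exact ht ⟨a, ha, t - a, subset_tsupport g hne, add_sub_cancel a t⟩

end Translate

open scoped translate in
lemma convolution_translate_translate {G : Type*} [AddCommGroup G] [MeasurableSpace G]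
    [MeasurableAdd G] {μ : Measure G} [μ.IsAddRightInvariant] (g h : G → ℂ) (a b : G) :
    (fun t => ∫ s, τ a g s * τ b h (t - s) ∂μ) = fun t => ∫ s, τ (a + b) g s * h (t - s) ∂μ := by
  funext t
  rw [← integral_sub_right_eq_self _ b]
  congr 1 with s
  simp only [translate_apply]
  rw [sub_sub, add_comm b a, sub_sub, sub_add_cancel]

lemma isGenChar_div {G : Type*} [AddCommGroup G] [TopologicalSpace G] {Φ : G → ℂ} {c : ℂ}
    (hc : c ≠ 0) (hΦ : Continuous Φ) (h0 : Φ 0 = c)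
    (hmul : ∀ a b, Φ a * Φ b = Φ (a + b) * c) :
    IsGenChar fun a => Φ a / c := by
  have hmul' (a b : G) : Φ (a + b) / c = Φ a / c * (Φ b / c) := by
    rw [div_mul_div_comm, hmul, mul_div_mul_right _ _ hc]
  refine ⟨hΦ.div_const c, fun a (ha : Φ a / c = 0) => ?_, hmul'⟩
  have h1 := hmul' a (-a)
  rw [add_neg_cancel, h0, div_self hc, ha, zero_mul] at h1
  exact one_ne_zero h1

namespace IsGelfandFunctional

open scoped translate

variable {G : Type*} [AddCommGroup G] [TopologicalSpace G] [IsTopologicalAddGroup G]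
  [MeasurableSpace G] {μ : Measure G} {φ : (G → ℂ) → ℂ}

lemma exists_clm_eq (hφ : IsGelfandFunctional μ φ) {K : Set G} (hK : IsCompact K) :
    ∃ L : bcfSupportedIn K →L[ℂ] ℂ, ∀ h, L h = φ (h : G →ᵇ ℂ) := by
  obtain ⟨hadd, hsmul, -, -, hbound⟩ := hφ
  obtain ⟨C, hC⟩ := hbound (closure K) hK.closure
  have hcs (h : bcfSupportedIn K) : HasCompactSupport (h : G →ᵇ ℂ) :=
    HasCompactSupport.intro hK h.2
  let L : bcfSupportedIn K →ₗ[ℂ] ℂ :=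
    { toFun h := φ (h : G →ᵇ ℂ)
      map_add' a b := hadd _ _ (a : G →ᵇ ℂ).continuous (hcs a) (b : G →ᵇ ℂ).continuous (hcs b)
      map_smul' c a := hsmul c _ (a : G →ᵇ ℂ).continuous (hcs a) }
  refine ⟨L.mkContinuous (max C 0) fun h => ?_, fun h => rfl⟩
  have hsupp : tsupport (h : G →ᵇ ℂ) ⊆ closure K :=
    closure_mono fun x hx => by_contra fun hxK => hx (h.2 x hxK)
  calc ‖φ (h : G →ᵇ ℂ)‖ ≤ C * ⨆ t, ‖(h : G →ᵇ ℂ) t‖ := hC _ (h : G →ᵇ ℂ).continuous hsupp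
    _ ≤ max C 0 * ‖h‖ := by
      rw [← BoundedContinuousFunction.norm_eq_iSup_norm]
      exact mul_le_mul_of_nonneg_right (le_max_left C 0) (norm_nonneg _)

lemma continuous_map_translate [LocallyCompactSpace G] (hφ : IsGelfandFunctional μ φ)
    {g : G →ᵇ ℂ} (hgs : HasCompactSupport g) : Continuous fun a => φ (τ a g) := by
  refine continuous_iff_continuousAt.2 fun a₀ => ?_
  obtain ⟨N, hNc, hN⟩ := exists_compact_mem_nhds a₀
  obtain ⟨L, hL⟩ := hφ.exists_clm_eq (hNc.add hgs)
  have hLN : N.domRestrict (fun a => φ (τ a g)) =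
      fun a : N => L ⟨g.translate a, g.translate_mem_bcfSupportedIn a.2⟩ :=
    funext fun a => (hL ⟨g.translate a, g.translate_mem_bcfSupportedIn a.2⟩).symm
  have hcont : ContinuousOn (fun a => φ (τ a g)) N := by
    rw [continuousOn_iff_continuous_domRestrict, hLN]
    exact L.continuous.comp <| Continuous.subtype_mk
      ((BoundedContinuousFunction.continuous_translate hgs).comp continuous_subtype_val) _
  exact hcont.continuousAt hN

lemma map_convolution [OpensMeasurableSpace G] [IsFiniteMeasureOnCompacts μ]
    (hφ : IsGelfandFunctional μ φ) {f : G → ℂ} (hf : Continuous f) (hfs : HasCompactSupport f)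
    {g : G →ᵇ ℂ} (hgs : HasCompactSupport g) :
    φ (fun t => ∫ s, f s * g (t - s) ∂μ) = ∫ s, f s * φ (τ s g) ∂μ := by
  obtain ⟨L, hL⟩ := hφ.exists_clm_eq (hfs.isCompact.add hgs.isCompact)
  have hmem (s : G) : f s • g.translate s ∈ bcfSupportedIn (tsupport f + tsupport g) := by
    by_cases hfs0 : f s = 0
    · simp only [hfs0, zero_smul, Submodule.zero_mem]
    · exact Submodule.smul_mem _ _ (g.translate_mem_bcfSupportedIn (subset_tsupport f hfs0))
  let F (s : G) : bcfSupportedIn (tsupport f + tsupport g) := ⟨f s • g.translate s, hmem s⟩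
  have hF : Integrable F μ := by
    refine Continuous.integrable_of_hasCompactSupport ?_ ?_
    · exact (hf.smul (BoundedContinuousFunction.continuous_translate hgs)).subtype_mk _
    · exact hfs.mono fun s hs hfs0 => hs (Subtype.ext (by simp [F, hfs0]))
  have hconv : (fun t => ∫ s, f s * g (t - s) ∂μ) = ⇑((∫ s, F s ∂μ : bcfSupportedIn _) : G →ᵇ ℂ) :=
    funext fun t =>
      ((BoundedContinuousFunction.evalCLM ℂ t).comp (Submodule.subtypeL _)).integral_comp_comm hF
  rw [hconv, ← hL, ← L.integral_comp_comm hF]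
  congr 1 with s
  rw [hL]
  exact hφ.2.1 (f s) _ (g.translate s).continuous (hgs.translate s)

lemma map_translate_mul_map_translate [MeasurableAdd G] [μ.IsAddRightInvariant]
    (hφ : IsGelfandFunctional μ φ) {g : G → ℂ} (hg : Continuous g) (hgs : HasCompactSupport g)
    (a b : G) :
    φ (τ a g) * φ (τ b g) = φ (τ (a + b) g) * φ g := by
  have hτ (c : G) : Continuous (τ c g) := hg.comp (continuous_sub_right c)
  rw [← hφ.2.2.1 _ _ (hτ a) (hgs.translate a) (hτ b) (hgs.translate b),
    ← hφ.2.2.1 _ _ (hτ (a + b)) (hgs.translate (a + b)) hg hgs, convolution_translate_translate]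

theorem exists_isGenChar [LocallyCompactSpace G] [OpensMeasurableSpace G] [MeasurableAdd G]
    [IsFiniteMeasureOnCompacts μ] [μ.IsAddRightInvariant] (hφ : IsGelfandFunctional μ φ) :
    ∃ α : G → ℂ, IsGenChar α ∧
      ∀ f : G → ℂ, Continuous f → HasCompactSupport f → φ f = ∫ s, f s * α s ∂μ := by
  obtain ⟨g₀, hg₀, hg₀s, hφg₀⟩ := hφ.2.2.2.1
  obtain ⟨g, rfl⟩ := hg₀s.exists_boundedContinuousFunction_eq hg₀
  refine ⟨fun a => φ (τ a g) / φ g, isGenChar_div hφg₀ (hφ.continuous_map_translate hg₀s)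
    (by rw [translate_zero]) (hφ.map_translate_mul_map_translate hg₀ hg₀s), fun f hf hfs => ?_⟩
  apply mul_right_cancel₀ hφg₀
  calc φ f * φ g = φ (fun t => ∫ s, f s * g (t - s) ∂μ) :=
        (hφ.2.2.1 f g hf hfs hg₀ hg₀s).symm
    _ = ∫ s, f s * φ (τ s g) ∂μ := hφ.map_convolution hf hfs hg₀s
    _ = (∫ s, f s * (φ (τ s g) / φ g) ∂μ) * φ g := by
      rw [← integral_mul_const]
      congr 1 with s
      field_simp

end IsGelfandFunctional

theorem isGelfandFunctional_integral_mul {G : Type*} [AddCommGroup G] [TopologicalSpace G]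
    [IsTopologicalAddGroup G] [LocallyCompactSpace G] [SecondCountableTopology G]
    [MeasurableSpace G] [BorelSpace G] (μ : Measure G) [μ.IsAddHaarMeasure] {α : G → ℂ}
    (hα : IsGenChar α) : IsGelfandFunctional μ fun f => ∫ s, f s * α s ∂μ := by
  obtain ⟨hαc, hα0, hαmul⟩ := hα
  have hint {f : G → ℂ} (hf : Continuous f) (hfs : HasCompactSupport f) :
      Integrable (fun s => f s * α s) μ :=
    (hf.mul hαc).integrable_of_hasCompactSupport hfs.mul_right
  refine ⟨fun f g hf hfs hg hgs => ?_, fun c f _ _ => ?_, fun f g hf hfs hg hgs =>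
    integral_convolution_mul_of_map_add hαmul (hint hf hfs) (hint hg hgs), ?_,
    fun K hK => exists_norm_integral_mul_le hαc hK⟩
  · simp only [Pi.add_apply, add_mul]
    exact integral_add (hint hf hfs) (hint hg hgs)
  · simp only [Pi.smul_apply, smul_eq_mul, mul_assoc]
    exact integral_const_mul c _
  · by_contra! h
    exact hα0 0 (congrFun (eq_of_forall_integral_mul_eq hαc continuous_const fun f hf hfs => by
      simpa using h f hf hfs) 0)

theorem stmt_17 {G : Type*} [AddCommGroup G] [TopologicalSpace G] [IsTopologicalAddGroup G]
    [LocallyCompactSpace G] [SecondCountableTopology G] [MeasurableSpace G] [BorelSpace G]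
    (μ : Measure G) [μ.IsAddHaarMeasure] :
    (∀ α : G → ℂ, IsGenChar α →
        IsGelfandFunctional μ (fun f => ∫ s, f s * α s ∂μ)) ∧
    (∀ α β : G → ℂ, IsGenChar α → IsGenChar β →
        (fun f : G → ℂ => ∫ s, f s * α s ∂μ) = (fun f => ∫ s, f s * β s ∂μ) → α = β) ∧
    (∀ φ : (G → ℂ) → ℂ, IsGelfandFunctional μ φ → ∃ α : G → ℂ, IsGenChar α ∧
        ∀ f : G → ℂ, Continuous f → HasCompactSupport f → φ f = ∫ s, f s * α s ∂μ) := by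
  exact ⟨fun α hα => isGelfandFunctional_integral_mul μ hα,
    fun α β hα hβ h => eq_of_forall_integral_mul_eq hα.1 hβ.1 fun f _ _ => congrFun h f,
    fun φ hφ => hφ.exists_isGenChar⟩
end

section
/- Let G be a discrete abelian group. Then the map α ↦ φ_α, where φ_α(f) = Σ_{s ∈ G} f(s) α(s), is a homeomorphism from H(G) (homomorphisms G → ℂ* with the topology of pointwise convergence) onto the Gel'fand space of the convolution algebra C_c(G) of finitely supported complex functions on G, with its Gel'fand (weak-*) topology. -/
/-- The set of generalized characters on a discrete abelian group `G`, i.e.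
homomorphisms `G → ℂ*`, topologized by pointwise convergence (which agrees with
the compact-open topology since `G` is discrete). -/
def GenCharSpace (G : Type*) [AddCommGroup G] : Type _ :=
  {α : G → ℂ // (∀ x, α x ≠ 0) ∧ α 0 = 1 ∧ ∀ s t, α (s + t) = α s * α t}

noncomputable instance (G : Type*) [AddCommGroup G] : TopologicalSpace (GenCharSpace G) :=
  instTopologicalSpaceSubtype

/-- The Gel'fand space of the convolution algebra of finitely supported complex
functions on `G` (realized as `AddMonoidAlgebra ℂ G`, whose product is convolution):
nonzero multiplicative linear functionals, with the topology of pointwise (weak-*)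
convergence. -/
def GelfandSpace (G : Type*) [AddCommGroup G] : Type _ :=
  {φ : AddMonoidAlgebra ℂ G → ℂ //
    (∀ f g, φ (f * g) = φ f * φ g) ∧ (∀ f g, φ (f + g) = φ f + φ g) ∧
    (∀ (c : ℂ) f, φ (c • f) = c * φ f) ∧ φ ≠ 0}

noncomputable instance (G : Type*) [AddCommGroup G] : TopologicalSpace (GelfandSpace G) :=
  instTopologicalSpaceSubtype

/-! By the universal property of the group algebra (`AddMonoidAlgebra.lift`), algebra
homomorphisms `ℂ[G] → ℂ` correspond to monoid homomorphisms `Multiplicative G →* ℂ`. A nonzero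
multiplicative functional sends `1` to `1`, and a monoid homomorphism on a group never takes the
value `0`, so the two spaces of the statement are these two sets of homomorphisms. Both
topologies are pointwise; `φ_α f` is a finite sum of values of `α` and `α s = φ_α (δ_s)`, so the
bijection is continuous in both directions. -/

theorem map_one_eq_one_of_map_mul {M K : Type*} [MulOneClass M] [MonoidWithZero K]
    [IsLeftCancelMulZero K]
    {φ : M → K} (hmul : ∀ x y, φ (x * y) = φ x * φ y) (hne : φ ≠ 0) : φ 1 = 1 := by
  obtain ⟨x, hx⟩ := Function.ne_iff.mp hne
  exact mul_left_cancel₀ hx (by rw [← hmul, mul_one, mul_one])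

section

open AddMonoidAlgebra

variable {G : Type*} [AddCommGroup G]

namespace GenCharSpace

def equivMonoidHom : GenCharSpace G ≃ (Multiplicative G →* ℂ) where
  toFun α :=
    { toFun := fun s => α.1 s.toAdd
      map_one' := α.2.2.1
      map_mul' := fun s t => α.2.2.2 s.toAdd t.toAdd }
  invFun χ :=
    ⟨fun s => χ (.ofAdd s), fun s => ((Group.isUnit (Multiplicative.ofAdd s)).map χ).ne_zero,
      map_one χ, fun s t => map_mul χ (.ofAdd s) (.ofAdd t)⟩
  left_inv _ := rfl
  right_inv _ := rfl

end GenCharSpace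

namespace GelfandSpace

noncomputable def toAlgHom (φ : GelfandSpace G) : AddMonoidAlgebra ℂ G →ₐ[ℂ] ℂ :=
  AlgHom.ofLinearMap
    { toFun := φ.1
      map_add' := φ.2.2.1
      map_smul' := φ.2.2.2.1 }
    (map_one_eq_one_of_map_mul φ.2.1 φ.2.2.2.2) φ.2.1

noncomputable def equivAlgHom : GelfandSpace G ≃ (AddMonoidAlgebra ℂ G →ₐ[ℂ] ℂ) where
  toFun := toAlgHom
  invFun ψ :=
    ⟨ψ, map_mul ψ, map_add ψ, map_smul ψ,
      fun h => one_ne_zero <| (map_one ψ).symm.trans (congrFun h 1)⟩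
  left_inv _ := rfl
  right_inv _ := rfl

end GelfandSpace

noncomputable def charEquivGelfand : GenCharSpace G ≃ GelfandSpace G :=
  GenCharSpace.equivMonoidHom.trans ((lift ℂ ℂ G).trans GelfandSpace.equivAlgHom.symm)

theorem charEquivGelfand_apply_coe (α : GenCharSpace G) (f : AddMonoidAlgebra ℂ G) :
    (charEquivGelfand α).1 f = f.coeff.sum fun s c => c * α.1 s :=
  rfl

theorem charEquivGelfand_symm_apply_coe (φ : GelfandSpace G) (s : G) :
    (charEquivGelfand.symm φ).1 s = φ.1 (single s 1) :=
  rfl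

theorem continuous_charEquivGelfand : Continuous (charEquivGelfand (G := G)) := by
  refine continuous_induced_rng.2 (continuous_pi fun f => ?_)
  show Continuous fun α => (charEquivGelfand α).1 f
  simp only [charEquivGelfand_apply_coe, Finsupp.sum]
  exact continuous_finsetSum _ fun s _ =>
    continuous_const.mul ((continuous_apply s).comp continuous_subtype_val)

theorem continuous_charEquivGelfand_symm : Continuous (charEquivGelfand (G := G)).symm := by
  refine continuous_induced_rng.2 (continuous_pi fun s => ?_)
  show Continuous fun φ => (charEquivGelfand.symm φ).1 s
  simp only [charEquivGelfand_symm_apply_coe]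
  exact (continuous_apply _).comp continuous_subtype_val

end

theorem stmt_19 (G : Type*) [AddCommGroup G] :
    ∃ e : GenCharSpace G ≃ₜ GelfandSpace G,
      ∀ (α : GenCharSpace G) (f : AddMonoidAlgebra ℂ G),
        (e α).1 f = f.coeff.sum fun s c => c * α.1 s :=
  ⟨⟨charEquivGelfand, continuous_charEquivGelfand, continuous_charEquivGelfand_symm⟩,
    charEquivGelfand_apply_coe⟩
end
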